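/- The gradient of the clustering loss L = Σ_i Σ_j p_{ij} log(p_{ij}/q_{ij}) with respect to centroid μ_j equals 2 Σ_i (1+||z_i-μ_j||²)^{-1} (q_{ij} - p_{ij})(z_i - μ_j). -/

import Mathlib

/-!
For one data point the loss is `KL(p ‖ w / ∑ w)` for the kernel weights
`w k = (1 + ‖z - μ k‖²)⁻¹`, of which only `w j` depends on `μ j`. Since `∑ p = 1`,
`KL(p ‖ w / ∑ w) = ∑ p log p - ∑ p log w + log ∑ w`, whose derivative in `w j` is
`1 / ∑ w - p j / w j = (q j - p j) / w j`. The gradient of `w j` in `μ j` is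
`2 (w j)² (z - μ j)`, and the chain rule gives `2 w j (q j - p j) (z - μ j)`.
-/

noncomputable def studentQ' {d K : ℕ} (μ : Fin K → EuclideanSpace ℝ (Fin d))
    (z : EuclideanSpace ℝ (Fin d)) (j : Fin K) : ℝ :=
  (1 + ‖z - μ j‖ ^ 2)⁻¹ / ∑ j' : Fin K, (1 + ‖z - μ j'‖ ^ 2)⁻¹

open Real InnerProductSpace Function

section Gradient

variable {E : Type*} [NormedAddCommGroup E] [InnerProductSpace ℝ E] [CompleteSpace E]
  {f : E → ℝ} {g x : E}

theorem HasDerivAt.comp_hasGradientAt {φ : ℝ → ℝ} {φ' : ℝ} (hφ : HasDerivAt φ φ' (f x))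
    (hf : HasGradientAt f g x) : HasGradientAt (fun m => φ (f m)) (φ' • g) x := by
  rw [hasGradientAt_iff_hasFDerivAt, map_smul]
  exact hφ.comp_hasFDerivAt x (hasGradientAt_iff_hasFDerivAt.mp hf)

theorem HasGradientAt.sum {ι : Type*} {s : Finset ι} {f : ι → E → ℝ} {g : ι → E}
    (h : ∀ i ∈ s, HasGradientAt (f i) (g i) x) :
    HasGradientAt (fun m => ∑ i ∈ s, f i m) (∑ i ∈ s, g i) x := by
  rw [hasGradientAt_iff_hasFDerivAt, map_sum]
  exact HasFDerivAt.fun_sum fun i hi => hasGradientAt_iff_hasFDerivAt.mp (h i hi)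

end Gradient

section KL

noncomputable def klDivNormalized {ι : Type*} [Fintype ι] (p w : ι → ℝ) : ℝ :=
  ∑ k, p k * log (p k / (w k / ∑ l, w l))

variable {ι : Type*} [Fintype ι] {p w : ι → ℝ}

theorem mul_log_div_eq_mul_log_sub {a r : ℝ} (hr : r ≠ 0) :
    a * log (a / r) = a * log a - a * log r := by
  rcases eq_or_ne a 0 with rfl | ha
  · simp
  · rw [log_div ha hr, mul_sub]

theorem klDivNormalized_eq (hw : ∀ k, w k ≠ 0) (hS : ∑ k, w k ≠ 0) (hp : ∑ k, p k = 1) :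
    klDivNormalized p w = ∑ k, p k * log (p k) - ∑ k, p k * log (w k) + log (∑ k, w k) := by
  have hterm : ∀ k, p k * log (p k / (w k / ∑ l, w l)) =
      p k * log (p k) - p k * log (w k) + p k * log (∑ l, w l) := fun k => by
    rw [mul_log_div_eq_mul_log_sub (div_ne_zero (hw k) hS), log_div (hw k) hS]
    ring
  simp only [klDivNormalized, hterm, Finset.sum_add_distrib, Finset.sum_sub_distrib,
    ← Finset.sum_mul, hp, one_mul]

theorem hasDerivAt_klDivNormalized_update [DecidableEq ι] (hw : ∀ k, 0 < w k)
    (hp : ∑ k, p k = 1) (j : ι) :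
    HasDerivAt (fun t => klDivNormalized p (update w j t)) ((∑ k, w k)⁻¹ - p j / w j) (w j) := by
  have hupdate : ∀ k, HasDerivAt (fun t => update w j t k) ((Pi.single j 1 : ι → ℝ) k) (w j) :=
    hasDerivAt_pi.mp (hasDerivAt_update w j (w j))
  have hS : 0 < ∑ k, w k := Finset.sum_pos (fun k _ => hw k) ⟨j, Finset.mem_univ j⟩
  have hweighted : HasDerivAt (fun t => ∑ k, p k * log (update w j t k)) (p j / w j) (w j) :=
    (HasDerivAt.fun_sum fun k _ =>
      ((hupdate k).log (by simpa using (hw k).ne')).const_mul (p k)).congr_deriv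
        (by simp [Pi.single_apply, mul_ite, div_eq_mul_inv])
  have hnormalizer : HasDerivAt (fun t => log (∑ k, update w j t k)) (∑ k, w k)⁻¹ (w j) := by
    convert (HasDerivAt.fun_sum fun k _ => hupdate k).log (by simpa using hS.ne') using 1
    simp
  have hlocal : (fun t => klDivNormalized p (update w j t)) =ᶠ[nhds (w j)] fun t =>
      ∑ k, p k * log (p k) - ∑ k, p k * log (update w j t k) + log (∑ k, update w j t k) := by
    filter_upwards [Ioi_mem_nhds (hw j)] with t ht
    have hpos : ∀ k, 0 < update w j t k := fun k => by
      rcases eq_or_ne k j with rfl | hk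
      · simpa using ht
      · simpa [hk] using hw k
    exact klDivNormalized_eq (fun k => (hpos k).ne')
      (Finset.sum_pos (fun k _ => hpos k) ⟨j, Finset.mem_univ j⟩).ne' hp
  exact (((hweighted.const_sub _).add hnormalizer).congr_of_eventuallyEq hlocal).congr_deriv
    (by ring)

end KL

section StudentKernel

noncomputable def studentKernel {E : Type*} [NormedAddCommGroup E] (z m : E) : ℝ :=
  (1 + ‖z - m‖ ^ 2)⁻¹

theorem studentKernel_pos {E : Type*} [NormedAddCommGroup E] (z m : E) :
    0 < studentKernel z m := by
  unfold studentKernel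
  positivity

variable {E : Type*} [NormedAddCommGroup E] [InnerProductSpace ℝ E] [CompleteSpace E]

theorem hasGradientAt_studentKernel (z x : E) :
    HasGradientAt (studentKernel z) ((2 * studentKernel z x ^ 2) • (z - x)) x := by
  have hsq : HasFDerivAt (fun m => 1 + ‖z - m‖ ^ 2)
      (2 • (innerSL ℝ (z - x)).comp (-ContinuousLinearMap.id ℝ E)) x :=
    ((hasFDerivAt_id x).const_sub z).norm_sq.const_add 1
  have hinv := (hasDerivAt_inv (inv_pos.mp (studentKernel_pos z x)).ne').comp_hasFDerivAt x hsq
  rw [hasGradientAt_iff_hasFDerivAt]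
  refine hinv.congr_fderiv ?_
  ext v
  simp [studentKernel]
  ring

theorem hasGradientAt_klDivNormalized_studentKernel {ι : Type*} [Fintype ι] [DecidableEq ι]
    {p : ι → ℝ} (hp : ∑ k, p k = 1) (z : E) (μ : ι → E) (j : ι) :
    HasGradientAt (fun m => klDivNormalized p (studentKernel z ∘ update μ j m))
      ((2 * studentKernel z (μ j) *
        (studentKernel z (μ j) / ∑ l, studentKernel z (μ l) - p j)) • (z - μ j)) (μ j) := by
  have hκ := studentKernel_pos z (μ j)
  have hS : 0 < ∑ l, studentKernel z (μ l) :=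
    Finset.sum_pos (fun l _ => studentKernel_pos z (μ l)) ⟨j, Finset.mem_univ j⟩
  have hφ : HasDerivAt (fun t => klDivNormalized p (update (studentKernel z ∘ μ) j t))
      ((∑ l, studentKernel z (μ l))⁻¹ - p j / studentKernel z (μ j)) (studentKernel z (μ j)) :=
    hasDerivAt_klDivNormalized_update (fun k => studentKernel_pos z (μ k)) hp j
  have hloss : (fun m => klDivNormalized p (studentKernel z ∘ update μ j m)) =
      fun m => klDivNormalized p (update (studentKernel z ∘ μ) j (studentKernel z m)) :=
    funext fun m => by rw [comp_update]
  rw [hloss]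
  convert hφ.comp_hasGradientAt (hasGradientAt_studentKernel z (μ j)) using 1
  rw [smul_smul]
  congr 1
  field_simp

end StudentKernel

theorem gradient_clustering_loss_wrt_centroid_general (d K N : ℕ)
    (z : Fin N → EuclideanSpace ℝ (Fin d))
    (μ : Fin K → EuclideanSpace ℝ (Fin d))
    (p : Fin N → Fin K → ℝ)
    (hpsum : ∀ i, ∑ j, p i j = 1) (j : Fin K) :
    HasGradientAt
      (fun m : EuclideanSpace ℝ (Fin d) =>
        ∑ i, ∑ k, p i k * Real.log (p i k / studentQ' (Function.update μ j m) (z i) k))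
      (2 • ∑ i, ((1 + ‖z i - μ j‖ ^ 2)⁻¹ * (studentQ' μ (z i) j - p i j)) • (z i - μ j))
      (μ j) := by
  have hsum := HasGradientAt.sum fun i (_ : i ∈ Finset.univ) =>
    hasGradientAt_klDivNormalized_studentKernel (hpsum i) (z i) μ j
  convert hsum using 1
  · rfl
  · simp only [Finset.smul_sum, smul_smul, ← Nat.cast_smul_eq_nsmul ℝ, Nat.cast_ofNat, mul_assoc]
    rfl

theorem gradient_clustering_loss_wrt_centroid (d K N : ℕ)
    (z : Fin N → EuclideanSpace ℝ (Fin d))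
    (μ : Fin K → EuclideanSpace ℝ (Fin d))
    (p : Fin N → Fin K → ℝ) (hp : ∀ i j, 0 < p i j)
    (hpsum : ∀ i, ∑ j, p i j = 1) (j : Fin K) :
    HasGradientAt
      (fun m : EuclideanSpace ℝ (Fin d) =>
        ∑ i, ∑ k, p i k * Real.log (p i k / studentQ' (Function.update μ j m) (z i) k))
      (2 • ∑ i, ((1 + ‖z i - μ j‖ ^ 2)⁻¹ * (studentQ' μ (z i) j - p i j)) • (z i - μ j))
      (μ j) :=
  gradient_clustering_loss_wrt_centroid_general d K N z μ p hpsum j
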